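/- Failure of Leibniz law in the algebraic three-valued model: let H₃ be the three-element Heyting chain {0, ½, 1} with Gödel implication, and interpret negation compositionally by the dual-pseudocomplement operation ¬0 = 1, ¬½ = 1, ¬1 = 0, setting ‖¬φ‖ = ¬‖φ‖. Then for every H₃-name w, taking the names u = {⟨w, ½⟩} and v = {⟨w, 1⟩}, one has ‖u ≈ v‖ = ½, ‖¬(w ∈ u)‖ = 1 and ‖¬(w ∈ v)‖ = 0; consequently ‖u ≈ v‖ ≰ ‖¬(w ∈ u) → ¬(w ∈ v)‖, so Leibniz law fails for the formula ¬(w ∈ x). -/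

import Mathlib

universe u

/-- The universe `V^A` of `A`-names over a complete Heyting algebra `A`:
an `A`-name is a function from a set (of previously constructed `A`-names)
into `A`, here encoded by an indexing type `ι`, a family `elts` of names and
the family `val` of their attached truth values. -/
inductive HName (A : Type u) : Type (u + 1) where
  | mk (ι : Type u) (elts : ι → HName A) (val : ι → A)

namespace HName

variable {A : Type u}

/-- The indexing type of (the domain of) a name. -/
def ι : HName A → Type u
  | mk ι _ _ => ι

/-- The members of (the domain of) a name. -/
def elts : (u : HName A) → u.ι → HName A
  | mk _ e _ => e

/-- The values attached by a name to the members of its domain. -/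
def val : (u : HName A) → u.ι → A
  | mk _ _ v => v

/-- Ordinal rank of a name (used for the recursive definition of truth values). -/
noncomputable def rank : HName A → Ordinal.{u}
  | mk _ e _ => Ordinal.lsub fun i => (e i).rank

theorem rank_lt {ι : Type u} (e : ι → HName A) (v : ι → A) (i : ι) :
    (e i).rank < (mk ι e v).rank := Ordinal.lt_lsub _ i

variable [Order.Frame A]

/-- The truth value `‖u ≈ v‖` of equality of two names, defined by the recursion
`‖u ≈ v‖ = ⨅_{x ∈ dom u} (u(x) ⇨ ‖x ∈ v‖) ⊓ ⨅_{y ∈ dom v} (v(y) ⇨ ‖y ∈ u‖)`,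
where `‖x ∈ v‖ = ⨆_{y ∈ dom v} (v(y) ⊓ ‖y ≈ x‖)` is inlined. -/
noncomputable def eqVal : HName A → HName A → A
  | mk ι e a, mk κ f b =>
      (⨅ i, a i ⇨ ⨆ j, b j ⊓ eqVal (f j) (e i)) ⊓
      (⨅ j, b j ⇨ ⨆ i, a i ⊓ eqVal (e i) (f j))
termination_by u v => max u.rank v.rank
decreasing_by
  · exact max_lt (lt_of_lt_of_le (rank_lt f b j) (le_max_right _ _))
      (lt_of_lt_of_le (rank_lt e a i) (le_max_left _ _))
  · exact max_lt (lt_of_lt_of_le (rank_lt e a i) (le_max_left _ _))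
      (lt_of_lt_of_le (rank_lt f b j) (le_max_right _ _))

/-- The truth value `‖u ∈ v‖ = ⨆_{x ∈ dom v} (v(x) ⊓ ‖x ≈ u‖)` of membership. -/
noncomputable def memVal (u v : HName A) : A :=
  ⨆ j : v.ι, v.val j ⊓ eqVal (v.elts j) u

end HName


/-- The three-element Heyting chain `H₃ = {0, ½, 1}`, modeled as `Fin 3` with
`0 = 0`, `½ = 1` and `1 = 2` (a complete linear order, hence a complete Heyting
algebra with the Gödel implication). -/
abbrev H3 : Type := Fin 3

/-- The dual-pseudocomplement negation on `H₃`: `¬0 = 1`, `¬½ = 1`, `¬1 = 0`. -/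
def negH3 : H3 → H3
  | 0 => 2
  | 1 => 2
  | 2 => 0

/-! Both names have the single member `w`, and `‖w ≈ w‖ = 1`, so `‖u ≈ v‖` collapses to
`(½ ⇨ 1) ⊓ (1 ⇨ ½) = ½` and `‖w ∈ u‖`, `‖w ∈ v‖` are just the attached values `½` and `1`.
The dual pseudocomplement sends these to `1` and `0`, and `1 ⇨ 0 = 0` lies strictly below `½`. -/

namespace HName

variable {A : Type u} [Order.Frame A]

theorem eqVal_self : ∀ u : HName A, eqVal u u = ⊤
  | mk ι e a => by
    rw [eqVal]
    refine top_unique (le_inf (le_iInf fun i => ?_) (le_iInf fun i => ?_)) <;>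
    · rw [top_le_iff, himp_eq_top_iff]
      refine le_trans ?_ (le_iSup _ i)
      rw [eqVal_self (e i), inf_top_eq]

theorem eqVal_mk_punit (w : HName A) (a b : A) :
    eqVal (mk PUnit (fun _ => w) (fun _ => a)) (mk PUnit (fun _ => w) (fun _ => b)) =
      (a ⇨ b) ⊓ (b ⇨ a) := by
  simp only [eqVal, eqVal_self, inf_top_eq, ciSup_unique, ciInf_unique]

theorem memVal_mk_punit (w : HName A) (a : A) :
    memVal w (mk PUnit (fun _ => w) (fun _ => a)) = a := by
  simp only [memVal, ι, val, elts, eqVal_self, inf_top_eq, ciSup_unique]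

end HName

open HName in
/-- Failure of Leibniz law in the algebraic three-valued model `V^{H₃}`, where
negation is interpreted compositionally via the dual pseudocomplement,
`‖¬φ‖ = ¬‖φ‖`: for every `H₃`-name `w`, the names `u = {⟨w, ½⟩}` and
`v = {⟨w, 1⟩}` satisfy `‖u ≈ v‖ = ½`, `‖¬(w ∈ u)‖ = 1` and `‖¬(w ∈ v)‖ = 0`;
consequently `‖u ≈ v‖ ≰ ‖¬(w ∈ u) → ¬(w ∈ v)‖`, i.e. Leibniz law fails for the
formula `¬(w ∈ x)`. -/
theorem leibniz_fails_H3 (w : HName H3) :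
    eqVal (HName.mk PUnit (fun _ => w) (fun _ => (1 : H3)))
        (HName.mk PUnit (fun _ => w) (fun _ => (2 : H3))) = (1 : H3) ∧
      negH3 (memVal w (HName.mk PUnit (fun _ => w) (fun _ => (1 : H3)))) = (2 : H3) ∧
      negH3 (memVal w (HName.mk PUnit (fun _ => w) (fun _ => (2 : H3)))) = (0 : H3) ∧
      ¬ eqVal (HName.mk PUnit (fun _ => w) (fun _ => (1 : H3)))
            (HName.mk PUnit (fun _ => w) (fun _ => (2 : H3))) ≤
          negH3 (memVal w (HName.mk PUnit (fun _ => w) (fun _ => (1 : H3)))) ⇨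
            negH3 (memVal w (HName.mk PUnit (fun _ => w) (fun _ => (2 : H3)))) := by
  rw [eqVal_mk_punit, memVal_mk_punit, memVal_mk_punit]
  decide
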